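/- Let T : P_n → P_n be a nonzero linear operator. If there exists C > 0 such that for every nonconstant f ∈ P_n some root of f and some root of Tf are within distance C of each other, then T = a_0 I + a_1 D + ... + a_n D^n with a_0 = (Tφ_0)(0) ≠ 0 and a_k = (Tφ_k)(0); in particular T is an invertible element of 𝒟(P_n). -/

import Mathlib

open Polynomial

/-- `P n` is the space of complex polynomials of degree at most `n`. -/
noncomputable def Pn (n : ℕ) : Submodule ℂ (Polynomial ℂ) := Polynomial.degreeLT ℂ (n + 1)

noncomputable instance instPnEndAddCommGroup (n : ℕ) : AddCommGroup (Module.End ℂ (Pn n)) :=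
  LinearMap.addCommGroup

noncomputable instance instPnEndRing (n : ℕ) : Ring (Module.End ℂ (Pn n)) := Module.End.instRing

/-- The differentiation operator on `Pn n`. -/
noncomputable def Dop (n : ℕ) : Module.End ℂ (Pn n) :=
  (Polynomial.derivative (R := ℂ)).restrict (p := Pn n) (q := Pn n)
    (fun f hf => by
      simp only [Pn, Polynomial.mem_degreeLT] at *
      exact lt_of_le_of_lt (Polynomial.degree_derivative_le) hf)

/-- `calD n` is the span of `I, D, D^2, ..., D^n` in `L(Pn n)`. -/
noncomputable def calD (n : ℕ) : Submodule ℂ (Module.End ℂ (Pn n)) :=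
  Submodule.span ℂ (Set.range fun k : Fin (n + 1) => (Dop n) ^ (k : ℕ))

/-- `φ_k(z) = z^k / k!` as an element of `Pn n` (for `k ≤ n`). -/
noncomputable def phiP (n k : ℕ) (h : k ≤ n) : Pn n :=
  ⟨Polynomial.C (((Nat.factorial k : ℂ))⁻¹) * Polynomial.X ^ k, by
    rw [Pn, Polynomial.mem_degreeLT]
    exact lt_of_le_of_lt (Polynomial.degree_C_mul_X_pow_le _ _)
      (by exact_mod_cast Nat.lt_succ_of_le h)⟩

/-!
Extend `T` to `L : ℂ[X] → ℂ[X]` by reducing modulo `X ^ (n + 1)`, and let `D = ∑ aₖ Dᵏ` with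
`aₖ = (L φₖ)(0)`. We show `L Xᵐ = D Xᵐ` by induction on `m`. If `L = D` below degree `m`, then,
as `D` commutes with translations, `L (X - b)ᵐ = (D Xᵐ)(· - b) + E` with `E = L Xᵐ - D Xᵐ`.
A root `v` of it within `C` of `b` gives `‖E(v)‖ ≤ max_{‖w‖ ≤ C} ‖(D Xᵐ)(w)‖`; letting `b → ∞`,
`E` is bounded at points of arbitrarily large modulus, hence constant, and `E = E(0) = 0` by the
choice of `aₘ`. For `m = 0` one tests with `Xⁿ + sⁿ`, whose roots all have modulus `s`:
then `sⁿ ‖(L 1)(v)‖ = ‖(L Xⁿ)(v)‖ = O(sⁿ)`.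

If `a₀ = 0`, the first nonzero `aₘ` makes `L Xᵐ = aₘ m!` a nonzero constant, which has no root.
Finally `a₀ ≠ 0` and `D` nilpotent make `T = a₀ + (nilpotent)` a unit.
-/

open Finset Filter Set
open scoped Nat

namespace Polynomial

section NormedField

variable {𝕜 : Type*} [NormedField 𝕜]

theorem exists_norm_eval_le_mul_one_add_norm_pow {p : 𝕜[X]} {n : ℕ} (hp : p.natDegree ≤ n) :
    ∃ M, 0 ≤ M ∧ ∀ z, ‖p.eval z‖ ≤ M * (1 + ‖z‖) ^ n := by
  refine ⟨∑ i ∈ range (n + 1), ‖p.coeff i‖, by positivity, fun z => ?_⟩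
  rw [eval_eq_sum_range' (Nat.lt_succ_of_le hp), sum_mul]
  refine (norm_sum_le _ _).trans (sum_le_sum fun i hi => ?_)
  rw [norm_mul, norm_pow]
  have hz : 1 ≤ 1 + ‖z‖ := le_add_of_nonneg_right (norm_nonneg z)
  gcongr
  calc ‖z‖ ^ i ≤ (1 + ‖z‖) ^ i := by gcongr; linarith
    _ ≤ (1 + ‖z‖) ^ n := pow_le_pow_right₀ hz (Nat.lt_succ_iff.1 (mem_range.1 hi))

theorem degree_le_zero_of_forall_exists_norm_eval_le {p : 𝕜[X]} {M : ℝ}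
    (h : ∀ R : ℝ, ∃ z : 𝕜, R ≤ ‖z‖ ∧ ‖p.eval z‖ ≤ M) : p.degree ≤ 0 := by
  by_contra! hp
  choose z hz hzM using h
  have hzR : Tendsto (fun R => ‖z R‖) atTop atTop := tendsto_atTop_mono hz tendsto_id
  obtain ⟨R, hR⟩ := ((p.tendsto_norm_atTop hp hzR).eventually_gt_atTop M).exists
  exact (hzM R).not_gt hR

end NormedField

theorem eqOn_degreeLT_of_eq_X_pow {R M : Type*} [Semiring R] [AddCommMonoid M] [Module R M]
    {f g : R[X] →ₗ[R] M} {m : ℕ} (h : ∀ j < m, f (X ^ j) = g (X ^ j)) :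
    EqOn f g (degreeLT R m) := by
  classical
  rw [degreeLT_eq_span_X_pow]
  refine LinearMap.eqOn_span' ?_
  intro p hp
  obtain ⟨j, hj, rfl⟩ := by simpa using hp
  exact h j hj

section DiffOp

variable {R : Type*} [CommRing R]

noncomputable def diffOp (n : ℕ) (a : ℕ → R) : Module.End R R[X] :=
  ∑ k ∈ range (n + 1), a k • derivative ^ k

theorem diffOp_apply (n : ℕ) (a : ℕ → R) (p : R[X]) :
    diffOp n a p = ∑ k ∈ range (n + 1), a k • derivative^[k] p := by
  simp [diffOp, Module.End.pow_apply]

theorem iterate_derivative_comp_X_sub_C (p : R[X]) (b : R) (k : ℕ) :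
    derivative^[k] (p.comp (X - C b)) = (derivative^[k] p).comp (X - C b) := by
  have : Function.Commute (derivative : R[X] → R[X]) (·.comp (X - C b)) := fun q => by
    simp [derivative_comp]
  exact this.iterate_left k p

theorem diffOp_comp_X_sub_C (n : ℕ) (a : ℕ → R) (p : R[X]) (b : R) :
    diffOp n a (p.comp (X - C b)) = (diffOp n a p).comp (X - C b) := by
  simp [diffOp_apply, iterate_derivative_comp_X_sub_C, smul_comp]

theorem eval_zero_diffOp_X_pow {n m : ℕ} (a : ℕ → R) (hm : m ≤ n) :
    (diffOp n a (X ^ m)).eval 0 = a m * m ! := by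
  rw [diffOp_apply, eval_finsetSum, sum_eq_single_of_mem m (mem_range.2 (Nat.lt_succ_of_le hm))]
  · simp [iterate_derivative_X_pow_eq_smul, Nat.descFactorial_self]
  · intro k _ hk
    rw [iterate_derivative_X_pow_eq_smul, eval_smul, eval_smul, eval_pow, eval_X]
    rcases hk.lt_or_gt with hk | hk
    · rw [zero_pow (by omega), smul_zero, smul_zero]
    · rw [Nat.descFactorial_eq_zero_iff_lt.2 hk, Nat.cast_zero, zero_smul, smul_zero]

theorem diffOp_X_pow_of_forall_lt_eq_zero {n m : ℕ} {a : ℕ → R} (hm : m ≤ n)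
    (ha : ∀ k < m, a k = 0) : diffOp n a (X ^ m) = C (a m * m !) := by
  rw [diffOp_apply, sum_eq_single_of_mem m (mem_range.2 (Nat.lt_succ_of_le hm))]
  · simp [iterate_derivative_X_pow_eq_smul, Nat.descFactorial_self, smul_eq_C_mul]
  · intro k _ hk
    rcases hk.lt_or_gt with hk | hk
    · rw [ha k hk, zero_smul]
    · rw [iterate_derivative_eq_zero ((natDegree_X_pow_le m).trans_lt hk), smul_zero]

end DiffOp

end Polynomial

theorem isUnit_sum_smul_pow_of_isNilpotent {K A : Type*} [Field K] [Ring A] [Algebra K A]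
    {x : A} (hx : IsNilpotent x) {a : ℕ → K} (ha : a 0 ≠ 0) (N : ℕ) :
    IsUnit (∑ k ∈ range (N + 1), a k • x ^ k) := by
  rw [sum_range_succ', pow_zero, ← Algebra.algebraMap_eq_smul_one]
  refine IsNilpotent.isUnit_add_right_of_commute ?_ ((isUnit_iff_ne_zero.2 ha).map _)
    (Algebra.commutes _ _).symm
  exact Commute.isNilpotent_sum (fun k _ => (hx.pow_succ k).smul _)
    fun i j _ _ => ((Commute.pow_pow_self x _ _).smul_left _).smul_right _

def KeepsRootsNear (n : ℕ) (r : ℝ) (L : Module.End ℂ ℂ[X]) : Prop :=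
  ∀ p : ℂ[X], p.natDegree ≤ n → 0 < p.degree →
    ∃ u v, p.IsRoot u ∧ (L p).IsRoot v ∧ ‖u - v‖ ≤ r

noncomputable def diffCoeff (L : Module.End ℂ ℂ[X]) (k : ℕ) : ℂ :=
  (L (C (k ! : ℂ)⁻¹ * X ^ k)).eval 0

theorem diffCoeff_mul_factorial (L : Module.End ℂ ℂ[X]) (k : ℕ) :
    diffCoeff L k * k ! = (L (X ^ k)).eval 0 := by
  rw [diffCoeff, ← smul_eq_C_mul, map_smul, eval_smul, smul_eq_mul, mul_comm, ← mul_assoc,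
    mul_inv_cancel₀ (by exact_mod_cast k.factorial_ne_zero), one_mul]

theorem eval_zero_sub_diffOp_X_pow (L : Module.End ℂ ℂ[X]) {n m : ℕ} (hm : m ≤ n) :
    (L (X ^ m) - diffOp n (diffCoeff L) (X ^ m)).eval 0 = 0 := by
  rw [eval_sub, eval_zero_diffOp_X_pow _ hm, diffCoeff_mul_factorial, sub_self]

namespace KeepsRootsNear

variable {n : ℕ} {r : ℝ} {L : Module.End ℂ ℂ[X]}

theorem degree_map_one_le_zero (h : KeepsRootsNear n r L)
    (hLn : ∀ p : ℂ[X], p.natDegree ≤ n → (L p).natDegree ≤ n) : (L 1).degree ≤ 0 := by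
  rcases Nat.eq_zero_or_pos n with rfl | hn
  · exact natDegree_eq_zero_iff_degree_le_zero.1 (Nat.le_zero.1 (hLn 1 natDegree_one.le))
  obtain ⟨M, hM0, hM⟩ :=
    exists_norm_eval_le_mul_one_add_norm_pow (hLn (X ^ n) (natDegree_X_pow n).le)
  refine degree_le_zero_of_forall_exists_norm_eval_le (M := M * (2 + r) ^ n) fun R => ?_
  set s : ℝ := max (R + r) 1
  have hs : 1 ≤ s := le_max_right _ _
  have hp : (X ^ n + C ((s : ℂ) ^ n)).degree = (n : WithBot ℕ) := degree_X_pow_add_C hn _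
  obtain ⟨u, v, hu, hv, huv⟩ :=
    h _ (natDegree_le_of_degree_le hp.le) (by rw [hp]; exact_mod_cast hn)
  have hr : 0 ≤ r := (norm_nonneg _).trans huv
  have hus : ‖u‖ = s := by
    have hun : u ^ n = -(s : ℂ) ^ n := by
      simpa [eq_neg_iff_add_eq_zero] using hu
    have := congrArg norm hun
    rw [norm_pow, norm_neg, norm_pow, Complex.norm_real,
      Real.norm_of_nonneg (by positivity)] at this
    exact (pow_left_inj₀ (norm_nonneg _) (by positivity) hn.ne').1 this
  have hv : (L (X ^ n)).eval v = -(s : ℂ) ^ n * (L 1).eval v := by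
    rw [IsRoot, ← mul_one (C _), ← smul_eq_C_mul, map_add, map_smul, eval_add, eval_smul,
      smul_eq_mul] at hv
    linear_combination hv
  have huv' := abs_le.1 ((abs_norm_sub_norm_le u v).trans huv)
  refine ⟨v, by linarith [le_max_left (R + r) 1], ?_⟩
  have key : s ^ n * ‖(L 1).eval v‖ ≤ s ^ n * (M * (2 + r) ^ n) :=
    calc s ^ n * ‖(L 1).eval v‖ = ‖(L (X ^ n)).eval v‖ := by
          rw [hv, norm_mul, norm_neg, norm_pow, Complex.norm_real,
            Real.norm_of_nonneg (by positivity)]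
      _ ≤ M * (1 + ‖v‖) ^ n := hM v
      _ ≤ M * ((2 + r) * s) ^ n := by gcongr; nlinarith
      _ = s ^ n * (M * (2 + r) ^ n) := by rw [mul_pow]; ring
  exact le_of_mul_le_mul_left key (by positivity)

theorem degree_map_X_pow_sub_le_zero (h : KeepsRootsNear n r L) {D : Module.End ℂ ℂ[X]}
    (hD : ∀ p b, D (p.comp (X - C b)) = (D p).comp (X - C b)) {m : ℕ} (hm : 0 < m)
    (hmn : m ≤ n) (hlow : EqOn L D (degreeLT ℂ m)) : (L (X ^ m) - D (X ^ m)).degree ≤ 0 := by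
  obtain ⟨B, hB⟩ := (isCompact_closedBall (0 : ℂ) r).exists_bound_of_continuousOn
    (D (X ^ m)).continuous.continuousOn
  refine degree_le_zero_of_forall_exists_norm_eval_le (M := B) fun R => ?_
  set b : ℂ := ((R + r : ℝ) : ℂ)
  have hp : ((X - C b) ^ m).degree = (m : WithBot ℕ) := by simp
  obtain ⟨u, v, hu, hv, huv⟩ :=
    h _ (natDegree_le_of_degree_le (hp.trans_le (by exact_mod_cast hmn)))
      (by rw [hp]; exact_mod_cast hm)
  obtain rfl : u = b := by simpa [sub_eq_zero, hm.ne'] using hu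
  -- `L` and `D` agree below degree `m`, and `D` commutes with translation
  have hLp : L ((X - C b) ^ m) = (D (X ^ m)).comp (X - C b) + (L (X ^ m) - D (X ^ m)) := by
    have hlt : (X - C b) ^ m - X ^ m ∈ degreeLT ℂ m := by
      rw [mem_degreeLT, ← hp]
      exact degree_sub_lt_left (by simp) ((monic_X_sub_C b).pow m).ne_zero (by simp)
    have hDb : D ((X - C b) ^ m) = (D (X ^ m)).comp (X - C b) := by rw [← hD, X_pow_comp]
    have := hlow hlt
    rw [map_sub, map_sub, hDb] at this
    linear_combination this
  rw [IsRoot, hLp, eval_add, eval_comp, eval_sub, eval_X, eval_C] at hv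
  refine ⟨v, ?_, ?_⟩
  · have := (norm_sub_norm_le b v).trans huv
    have hb : R + r ≤ ‖b‖ := by rw [Complex.norm_real, Real.norm_eq_abs]; exact le_abs_self _
    linarith
  · rw [eq_neg_of_add_eq_zero_right hv, norm_neg]
    exact hB _ (by simpa [norm_sub_rev] using huv)

theorem eqOn_diffOp (h : KeepsRootsNear n r L)
    (hLn : ∀ p : ℂ[X], p.natDegree ≤ n → (L p).natDegree ≤ n) :
    EqOn L (diffOp n (diffCoeff L)) (degreeLT ℂ (n + 1)) := by
  suffices hX : ∀ m ≤ n, L (X ^ m) = diffOp n (diffCoeff L) (X ^ m) from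
    eqOn_degreeLT_of_eq_X_pow fun m hm => hX m (Nat.lt_succ_iff.1 hm)
  intro m
  induction m using Nat.strong_induction_on with
  | _ m ih =>
    intro hmn
    have hdeg : (L (X ^ m) - diffOp n (diffCoeff L) (X ^ m)).degree ≤ 0 := by
      rcases Nat.eq_zero_or_pos m with rfl | hm
      · rw [diffOp_X_pow_of_forall_lt_eq_zero (Nat.zero_le n) (by simp), pow_zero]
        exact (degree_sub_le _ _).trans (max_le (h.degree_map_one_le_zero hLn) degree_C_le)
      · exact h.degree_map_X_pow_sub_le_zero (diffOp_comp_X_sub_C n _) hm hmn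
          (eqOn_degreeLT_of_eq_X_pow fun j hj => ih j hj (by omega))
    rw [← sub_eq_zero, eq_C_of_degree_le_zero hdeg, coeff_zero_eq_eval_zero,
      eval_zero_sub_diffOp_X_pow L hmn, C_0]

theorem diffCoeff_zero_ne_zero (h : KeepsRootsNear n r L)
    (hLD : EqOn L (diffOp n (diffCoeff L)) (degreeLT ℂ (n + 1)))
    (hL : ¬ EqOn L 0 (degreeLT ℂ (n + 1))) : diffCoeff L 0 ≠ 0 := by
  intro h0
  have hex : ∃ m, m ≤ n ∧ diffCoeff L m ≠ 0 := by
    by_contra! hall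
    refine hL (hLD.trans fun p _ => ?_)
    rw [diffOp_apply]
    exact sum_eq_zero fun k hk => by rw [hall k (Nat.lt_succ_iff.1 (mem_range.1 hk)), zero_smul]
  classical
  obtain ⟨hmn, hm⟩ := Nat.find_spec hex
  set m := Nat.find hex
  have hm0 : m ≠ 0 := by rintro hm0; exact hm (hm0 ▸ h0)
  have hLm : L (X ^ m) = C (diffCoeff L m * m !) := by
    rw [hLD (mem_degreeLT.2 (by rw [degree_X_pow]; exact_mod_cast Nat.lt_succ_of_le hmn))]
    refine diffOp_X_pow_of_forall_lt_eq_zero hmn fun k hk => ?_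
    by_contra hk'
    exact Nat.find_min hex hk ⟨by omega, hk'⟩
  obtain ⟨-, v, -, hv, -⟩ :=
    h (X ^ m) (natDegree_X_pow_le m |>.trans hmn) (by simpa [pos_iff_ne_zero] using hm0)
  rw [hLm, IsRoot, eval_C] at hv
  exact mul_ne_zero hm (by exact_mod_cast m.factorial_ne_zero) hv

end KeepsRootsNear

section Pn

variable {n : ℕ}

theorem mem_Pn {p : ℂ[X]} : p ∈ Pn n ↔ p.natDegree ≤ n := by
  rw [Pn, degreeLT_succ_eq_degreeLE, mem_degreeLE, natDegree_le_iff_degree_le]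

noncomputable def truncPn (n : ℕ) : ℂ[X] →ₗ[ℂ] Pn n :=
  (modByMonicHom (X ^ (n + 1))).codRestrict (Pn n) fun p =>
    mem_degreeLT.2 (by simpa using degree_modByMonic_lt p (monic_X_pow (n + 1)))

theorem truncPn_coe (f : Pn n) : truncPn n f = f :=
  Subtype.ext ((modByMonic_eq_self_iff (monic_X_pow _)).2 (by simpa using mem_degreeLT.1 f.2))

noncomputable def extendPn (T : Module.End ℂ (Pn n)) : Module.End ℂ ℂ[X] :=
  (Pn n).subtype ∘ₗ T ∘ₗ truncPn n

theorem extendPn_coe (T : Module.End ℂ (Pn n)) (f : Pn n) : extendPn T f = T f := by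
  simp [extendPn, truncPn_coe]

theorem natDegree_extendPn_le (T : Module.End ℂ (Pn n)) (p : ℂ[X]) :
    (extendPn T p).natDegree ≤ n :=
  mem_Pn.1 (T _).2

theorem coe_Dop_pow_apply (k : ℕ) (f : Pn n) :
    ((Dop n ^ k) f : ℂ[X]) = derivative^[k] (f : ℂ[X]) := by
  induction k generalizing f with
  | zero => rfl
  | succ k ih => rw [pow_succ, Module.End.mul_apply, ih, Function.iterate_succ_apply]; rfl

theorem isNilpotent_Dop (n : ℕ) : IsNilpotent (Dop n) :=
  ⟨n + 1, LinearMap.ext fun f => Subtype.ext <| by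
    rw [coe_Dop_pow_apply, iterate_derivative_eq_zero_of_degree_lt (mem_degreeLT.1 f.2)]; rfl⟩

end Pn

theorem T_eq_sum_of_derivatives_general (n : ℕ)
    (T : Module.End ℂ (Pn n)) (hT : T ≠ 0) (C : ℝ)
    (hyp : ∀ f : Pn n, 0 < (f : Polynomial ℂ).degree →
      ∃ u v, (f : Polynomial ℂ).IsRoot u ∧ ((T f : Pn n) : Polynomial ℂ).IsRoot v ∧
        ‖u - v‖ ≤ C) :
    T = ∑ k : Fin (n + 1),
        (((T (phiP n k k.is_le) : Pn n) : Polynomial ℂ).eval 0) • (Dop n) ^ (k : ℕ) ∧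
    ((T (phiP n 0 (Nat.zero_le n)) : Pn n) : Polynomial ℂ).eval 0 ≠ 0 ∧
    T ∈ calD n ∧ IsUnit T := by
  set L := extendPn T
  have hL : KeepsRootsNear n C L := fun p hpn hp => by
    rw [show L p = T ⟨p, mem_Pn.2 hpn⟩ from extendPn_coe T ⟨p, _⟩]
    exact hyp ⟨p, _⟩ hp
  have hLD := hL.eqOn_diffOp fun p _ => natDegree_extendPn_le T p
  have hTD : T = ∑ k ∈ range (n + 1), diffCoeff L k • Dop n ^ k := by
    ext f : 1
    apply Subtype.ext
    rw [← extendPn_coe, hLD f.2, diffOp_apply]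
    simp [coe_Dop_pow_apply]
  have ha (k : ℕ) (hk : k ≤ n) : diffCoeff L k = (T (phiP n k hk) : ℂ[X]).eval 0 := by
    rw [diffCoeff, ← extendPn_coe]; rfl
  have ha0 : diffCoeff L 0 ≠ 0 := hL.diffCoeff_zero_ne_zero hLD fun hL0 =>
    hT (LinearMap.ext fun f => Subtype.ext (by rw [← extendPn_coe]; exact hL0 f.2))
  refine ⟨?_, ha 0 _ ▸ ha0, ?_, hTD ▸ isUnit_sum_smul_pow_of_isNilpotent (isNilpotent_Dop n) ha0 n⟩
  · refine (hTD.trans (Fin.sum_univ_eq_sum_range _ _).symm).trans ?_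
    exact sum_congr rfl fun k _ => by rw [ha k k.is_le]
  · rw [hTD]
    exact Submodule.sum_mem _ fun k hk =>
      Submodule.smul_mem _ _ (Submodule.subset_span ⟨⟨k, mem_range.1 hk⟩, rfl⟩)

/-- If a nonzero linear operator `T` on `P_n` is such that for some `C > 0` every
nonconstant `f ∈ P_n` has a root within distance `C` of some root of `Tf`, then
`T = a_0 I + a_1 D + ⋯ + a_n Dⁿ` with `a_k = (Tφ_k)(0)` and `a_0 ≠ 0`; in particular
`T` is an invertible element of `𝒟(P_n)`. -/
theorem T_eq_sum_of_derivatives (n : ℕ) (hn : 0 < n)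
    (T : Module.End ℂ (Pn n)) (hT : T ≠ 0) (C : ℝ) (hC : 0 < C)
    (hyp : ∀ f : Pn n, 0 < (f : Polynomial ℂ).degree →
      ∃ u v, (f : Polynomial ℂ).IsRoot u ∧ ((T f : Pn n) : Polynomial ℂ).IsRoot v ∧
        ‖u - v‖ ≤ C) :
    T = ∑ k : Fin (n + 1),
        (((T (phiP n k k.is_le) : Pn n) : Polynomial ℂ).eval 0) • (Dop n) ^ (k : ℕ) ∧
    ((T (phiP n 0 (Nat.zero_le n)) : Pn n) : Polynomial ℂ).eval 0 ≠ 0 ∧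
    T ∈ calD n ∧ IsUnit T :=
  T_eq_sum_of_derivatives_general n T hT C hyp
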